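/- arXiv:2503.18143 — 3 statements merged into one kernel-verified Lean document; each statement's English description precedes it below -/
import Mathlib

section
/- For α > d/2, the kernel of the operator 𝓛 on X_α consists exactly of the constant multiples of P_α(r) = (1+|r|²/2)^{−α}; that is, if g ∈ X_α is smooth with ∫(1+|r|²/2)^{1−α}|∇(g(1+|r|²/2)^α)|² dr = 0, then g = c·P_α for some constant c. -/
open MeasureTheory

/-- for `α > d/2`, the kernel of `𝓛` on `X_α` consists exactly of
constant multiples of `P_α(r) = (1+|r|²/2)^(−α)`: if `g ∈ X_α` is smooth and the
weighted Dirichlet energy `∫ (1+|r|²/2)^(1−α) |∇(g (1+|r|²/2)^α)|² dr` vanishes,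
then `g = c P_α` for some constant `c`. -/
theorem kernel_of_L_is_Cauchy
    (d : ℕ) (hd : d = 2 ∨ d = 3) (α : ℝ) (hα : (d : ℝ) / 2 < α)
    (g : EuclideanSpace ℝ (Fin d) → ℝ)
    (hX : Integrable (fun r => g r ^ 2 * (1 + ‖r‖ ^ 2 / 2) ^ α) volume)
    (hg : ContDiff ℝ (⊤ : ℕ∞) g)
    (hzero : ∫⁻ r : EuclideanSpace ℝ (Fin d),
        ENNReal.ofReal ((1 + ‖r‖ ^ 2 / 2) ^ (1 - α) *
          ‖gradient (fun y => g y * (1 + ‖y‖ ^ 2 / 2) ^ α) r‖ ^ 2) = 0) :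
    ∃ c : ℝ, ∀ r, g r = c * (1 + ‖r‖ ^ 2 / 2) ^ (-α) := by
  set h : EuclideanSpace ℝ (Fin d) → ℝ := fun y => g y * (1 + ‖y‖ ^ 2 / 2) ^ α with hh_def
  have hpos : ∀ r : EuclideanSpace ℝ (Fin d), (0:ℝ) < 1 + ‖r‖ ^ 2 / 2 := by
    intro r; positivity
  -- smoothness of h
  have hw : ContDiff ℝ (⊤ : ℕ∞) (fun y : EuclideanSpace ℝ (Fin d) => (1 + ‖y‖ ^ 2 / 2) ^ α) := by
    rw [contDiff_iff_contDiffAt]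
    intro y
    refine ContDiffAt.rpow_const_of_ne ?_ (ne_of_gt (hpos y))
    exact ((contDiff_const.add ((contDiff_norm_sq ℝ (E := EuclideanSpace ℝ (Fin d))).div_const 2)).contDiffAt)
  have hh : ContDiff ℝ (⊤ : ℕ∞) h := hg.mul hw
  -- gradient of h is continuous
  have hgradcont : Continuous (fun r => gradient h r) := by
    have := hh.continuous_fderiv (by simp)
    exact (InnerProductSpace.toDual ℝ (EuclideanSpace ℝ (Fin d))).symm.continuous.comp this
  -- the integrand is continuous
  have hcont : Continuous (fun r : EuclideanSpace ℝ (Fin d) =>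
      ENNReal.ofReal ((1 + ‖r‖ ^ 2 / 2) ^ (1 - α) * ‖gradient h r‖ ^ 2)) := by
    apply ENNReal.continuous_ofReal.comp
    apply Continuous.mul
    · apply Continuous.rpow_const
      · exact continuous_const.add ((continuous_norm.pow 2).div_const 2)
      · intro x; left; exact ne_of_gt (hpos x)
    · exact (hgradcont.norm.pow 2)
  -- a.e. vanishing of the gradient
  have hae : ∀ᵐ r : EuclideanSpace ℝ (Fin d), gradient h r = 0 := by
    have h0 := (lintegral_eq_zero_iff hcont.measurable).mp hzero
    filter_upwards [h0] with r hr
    simp only [Pi.zero_apply, ENNReal.ofReal_eq_zero] at hr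
    have h1 : (0:ℝ) < (1 + ‖r‖ ^ 2 / 2) ^ (1 - α) := Real.rpow_pos_of_pos (hpos r) _
    have h2 : (0:ℝ) ≤ ‖gradient h r‖ ^ 2 := by positivity
    have : ‖gradient h r‖ ^ 2 = 0 := by nlinarith
    have : ‖gradient h r‖ = 0 := by nlinarith [norm_nonneg (gradient h r)]
    simpa using this
  -- continuity upgrades a.e. to everywhere
  have hgrad0 : ∀ r, gradient h r = 0 := by
    have := (Continuous.ae_eq_iff_eq volume hgradcont continuous_const).mp hae
    intro r; exact congrFun this r
  -- hence fderiv vanishes everywhere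
  have hfderiv0 : ∀ r, fderiv ℝ h r = 0 := by
    intro r
    have : fderiv ℝ h r = (InnerProductSpace.toDual ℝ (EuclideanSpace ℝ (Fin d))) (gradient h r) := by
      rw [gradient, LinearIsometryEquiv.apply_symm_apply]
    rw [this, hgrad0 r, map_zero]
  -- h is constant
  have hconst : ∀ r, h r = h 0 := fun r =>
    is_const_of_fderiv_eq_zero (hh.differentiable (by simp)) hfderiv0 r 0
  refine ⟨h 0, fun r => ?_⟩
  have hne : (1 + ‖r‖ ^ 2 / 2) ^ α ≠ 0 := ne_of_gt (Real.rpow_pos_of_pos (hpos r) _)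
  have := hconst r
  rw [hh_def] at this
  simp only at this
  rw [Real.rpow_neg (le_of_lt (hpos r)), eq_comm, mul_inv_eq_iff_eq_mul₀ hne]
  exact this.symm
end

section
/- The Radon measure μ_α with density (1+|r|²/2)^{−α} satisfies, for every φ ∈ C_c²(ℝ^d), ∫_{ℝ^d}(1+|r|²/2)^{−α}[−α r·∇φ(r) + Δφ(r) + (1/2)div_r(A_b(r)∇φ(r))] dr = 0; i.e., μ_α is a distributional solution of div_r(α r μ + ∇_r μ + (1/2)A_b(r)∇_r μ) = 0. -/
/-! With `ρ(r) = (1 + |r|²/2)^(-α)` one has `∇ρ = -α ρ r / (1 + |r|²/2)`, while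
`r · A_b(r) v = |r|² (r · v)` gives `r · (v + ½ A_b(r) v) = (1 + |r|²/2) (r · v)`. Hence the
integrand is exactly the divergence of the compactly supported `C¹` field `ρ (∇φ + ½ A_b ∇φ)`,
and the integral of a divergence vanishes. -/

open MeasureTheory
open scoped RealInnerProductSpace

noncomputable def stretchMat {d : ℕ} (b : ℝ) (r v : EuclideanSpace ℝ (Fin d)) :
    EuclideanSpace ℝ (Fin d) :=
  ((b + 1) * ‖r‖ ^ 2) • v - (b * ⟪r, v⟫) • r

noncomputable def eucDiv {d : ℕ}
    (F : EuclideanSpace ℝ (Fin d) → EuclideanSpace ℝ (Fin d))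
    (r : EuclideanSpace ℝ (Fin d)) : ℝ :=
  ∑ i, (fderiv ℝ F r (EuclideanSpace.single i (1 : ℝ))) i

section IntegralFDeriv

variable {E F : Type*} [NormedAddCommGroup E] [NormedSpace ℝ E] [MeasurableSpace E]
  [BorelSpace E] {μ : Measure E} [NormedAddCommGroup F] [NormedSpace ℝ F]

theorem integrable_fderiv_apply [IsFiniteMeasureOnCompacts μ] {f : E → F}
    (hf : ContDiff ℝ 1 f) (hfs : HasCompactSupport f) (v : E) :
    Integrable (fun x => fderiv ℝ f x v) μ :=
  ((hf.continuous_fderiv one_ne_zero).clm_apply continuous_const).integrable_of_hasCompactSupport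
    ((hfs.fderiv ℝ).comp_left (g := fun L : E →L[ℝ] F => L v) rfl)

theorem integral_fderiv_apply_eq_zero [FiniteDimensional ℝ E] [μ.IsAddHaarMeasure] {f : E → F}
    (hf : ContDiff ℝ 1 f) (hfs : HasCompactSupport f) (v : E) :
    ∫ x, fderiv ℝ f x v ∂μ = 0 := by
  have h := integral_smul_fderiv_eq_neg_fderiv_smul_of_integrable (μ := μ)
    (f := fun _ => (1 : ℝ)) (g := f) (v := v) (by simp)
    (by simpa using integrable_fderiv_apply hf hfs v)
    (by simpa using hf.continuous.integrable_of_hasCompactSupport hfs)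
    (fun _ _ => differentiableAt_const _) (fun x _ => hf.differentiable one_ne_zero x)
  simpa using h

end IntegralFDeriv

section Gradient

variable {E : Type*} [NormedAddCommGroup E] [InnerProductSpace ℝ E] [CompleteSpace E]
  {f : E → ℝ}

theorem ContDiff.gradient {m n : WithTop ℕ∞} (hf : ContDiff ℝ n f) (hmn : m + 1 ≤ n) :
    ContDiff ℝ m (gradient f) :=
  (InnerProductSpace.toDual ℝ E).symm.toContinuousLinearEquiv.contDiff.comp (hf.fderiv_right hmn)

theorem HasCompactSupport.gradient (hf : HasCompactSupport f) : HasCompactSupport (gradient f) :=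
  (hf.fderiv ℝ).comp_left (g := (InnerProductSpace.toDual ℝ E).symm) (map_zero _)

end Gradient

section EucDiv

variable {d : ℕ} {F G : EuclideanSpace ℝ (Fin d) → EuclideanSpace ℝ (Fin d)}
  {x : EuclideanSpace ℝ (Fin d)}

theorem integral_eucDiv_eq_zero (hF : ContDiff ℝ 1 F) (hFs : HasCompactSupport F) :
    ∫ x, eucDiv F x = 0 := by
  have hint (i : Fin d) :=
    integrable_fderiv_apply (μ := volume) hF hFs (EuclideanSpace.single i 1)
  unfold eucDiv
  rw [integral_finsetSum _ fun i _ => by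
    simpa using (EuclideanSpace.proj (𝕜 := ℝ) i).integrable_comp (hint i)]
  refine Finset.sum_eq_zero fun i _ => ?_
  have := (EuclideanSpace.proj (𝕜 := ℝ) i).integral_comp_comm (hint i)
  simp only [EuclideanSpace.coe_proj] at this
  rw [this, integral_fderiv_apply_eq_zero hF hFs, PiLp.zero_apply]

theorem eucDiv_add (hF : DifferentiableAt ℝ F x) (hG : DifferentiableAt ℝ G x) :
    eucDiv (fun y => F y + G y) x = eucDiv F x + eucDiv G x := by
  simp only [eucDiv, fderiv_fun_add hF hG, add_apply, PiLp.add_apply, Finset.sum_add_distrib]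

theorem eucDiv_const_smul (hF : DifferentiableAt ℝ F x) (c : ℝ) :
    eucDiv (fun y => c • F y) x = c * eucDiv F x := by
  simp only [eucDiv, fderiv_fun_const_smul hF, smul_apply, PiLp.smul_apply,
    smul_eq_mul, Finset.mul_sum]

theorem eucDiv_smul {ρ : EuclideanSpace ℝ (Fin d) → ℝ} (hρ : DifferentiableAt ℝ ρ x)
    (hF : DifferentiableAt ℝ F x) :
    eucDiv (fun y => ρ y • F y) x = ρ x * eucDiv F x + fderiv ℝ ρ x (F x) := by
  have hexpand : fderiv ℝ ρ x (F x) = ∑ i, fderiv ℝ ρ x (EuclideanSpace.single i 1) * F x i := by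
    conv_lhs => rw [← (EuclideanSpace.basisFun (Fin d) ℝ).sum_repr (F x)]
    simp [mul_comm]
  simp only [eucDiv, fderiv_fun_smul hρ hF, add_apply, smul_apply,
    ContinuousLinearMap.smulRight_apply, PiLp.add_apply, PiLp.smul_apply, smul_eq_mul,
    Finset.sum_add_distrib, Finset.mul_sum, hexpand]

end EucDiv

theorem hasFDerivAt_one_add_norm_sq_div_two_rpow {E : Type*} [NormedAddCommGroup E]
    [InnerProductSpace ℝ E] (p : ℝ) (x : E) :
    HasFDerivAt (fun y : E => (1 + ‖y‖ ^ 2 / 2) ^ p)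
      ((p * (1 + ‖x‖ ^ 2 / 2) ^ (p - 1)) • innerSL ℝ x) x := by
  have hbase : HasFDerivAt (fun y : E => 1 + ‖y‖ ^ 2 / 2) (innerSL ℝ x) x := by
    have h := ((hasStrictFDerivAt_norm_sq x).hasFDerivAt.const_smul (2⁻¹ : ℝ)).const_add 1
    refine (h.congr_fderiv ?_).congr_of_eventuallyEq (.of_forall fun y => ?_)
    · ext v; simp
    · simp [div_eq_inv_mul]
  exact (Real.hasDerivAt_rpow_const (Or.inl (by positivity))).comp_hasFDerivAt x hbase

theorem contDiff_one_add_norm_sq_div_two_rpow {E : Type*} [NormedAddCommGroup E]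
    [InnerProductSpace ℝ E] (p : ℝ) {n : WithTop ℕ∞} :
    ContDiff ℝ n (fun y : E => (1 + ‖y‖ ^ 2 / 2) ^ p) :=
  contDiff_iff_contDiffAt.2 fun _ =>
    (contDiff_const.add (contDiff_norm_sq ℝ |>.div_const 2)).contDiffAt.rpow_const_of_ne
      (by positivity)

section StretchMat

variable {d : ℕ} (b : ℝ)

theorem stretchMat_zero_right (r : EuclideanSpace ℝ (Fin d)) : stretchMat b r 0 = 0 := by
  simp [stretchMat]

theorem inner_stretchMat_self_left (r v : EuclideanSpace ℝ (Fin d)) :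
    ⟪r, stretchMat b r v⟫ = ‖r‖ ^ 2 * ⟪r, v⟫ := by
  rw [stretchMat, inner_sub_right, inner_smul_right, inner_smul_right,
    real_inner_self_eq_norm_sq]
  ring

theorem ContDiff.stretchMat {n : WithTop ℕ∞}
    {V : EuclideanSpace ℝ (Fin d) → EuclideanSpace ℝ (Fin d)} (hV : ContDiff ℝ n V) :
    ContDiff ℝ n (fun r => stretchMat b r (V r)) :=
  ((contDiff_const.mul (contDiff_norm_sq ℝ)).smul hV).sub
    ((contDiff_const.mul (contDiff_id.inner ℝ hV)).smul contDiff_id)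

theorem DifferentiableAt.stretchMat
    {V : EuclideanSpace ℝ (Fin d) → EuclideanSpace ℝ (Fin d)} {x : EuclideanSpace ℝ (Fin d)}
    (hV : DifferentiableAt ℝ V x) : DifferentiableAt ℝ (fun r => stretchMat b r (V r)) x :=
  (((differentiableAt_const _).mul (differentiableAt_id.norm_sq ℝ)).smul hV).sub
    (((differentiableAt_const _).mul (differentiableAt_id.inner ℝ hV)).smul differentiableAt_id)

end StretchMat

theorem eucDiv_density_smul_add_half_stretchMat {d : ℕ} (α b : ℝ)
    {V : EuclideanSpace ℝ (Fin d) → EuclideanSpace ℝ (Fin d)} {x : EuclideanSpace ℝ (Fin d)}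
    (hV : DifferentiableAt ℝ V x) :
    eucDiv (fun y => (1 + ‖y‖ ^ 2 / 2) ^ (-α) • (V y + (1 / 2 : ℝ) • stretchMat b y (V y))) x =
      (1 + ‖x‖ ^ 2 / 2) ^ (-α) * (-α * ⟪x, V x⟫ + eucDiv V x +
        (1 / 2 : ℝ) * eucDiv (fun y => stretchMat b y (V y)) x) := by
  have hS := hV.stretchMat b
  have hρ := hasFDerivAt_one_add_norm_sq_div_two_rpow (-α) x
  have hu : (1 + ‖x‖ ^ 2 / 2) ^ (-α) = (1 + ‖x‖ ^ 2 / 2) ^ (-α - 1) * (1 + ‖x‖ ^ 2 / 2) := by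
    rw [← Real.rpow_add_one (by positivity), sub_add_cancel]
  rw [eucDiv_smul hρ.differentiableAt (hV.fun_add (hS.fun_const_smul _)),
    eucDiv_add hV (hS.fun_const_smul _), eucDiv_const_smul hS, hρ.fderiv]
  simp only [smul_apply, innerSL_apply_apply, smul_eq_mul, inner_add_right, inner_smul_right,
    inner_stretchMat_self_left]
  rw [hu]
  ring

theorem cauchy_measure_is_stationary_general
    (d : ℕ) (b : ℝ)
    (α : ℝ)
    (φ : EuclideanSpace ℝ (Fin d) → ℝ)
    (hφ : ContDiff ℝ 2 φ) (hsupp : HasCompactSupport φ) :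
    ∫ r : EuclideanSpace ℝ (Fin d),
      (1 + ‖r‖ ^ 2 / 2) ^ (-α) *
        (-α * ⟪r, gradient φ r⟫ + eucDiv (fun x => gradient φ x) r +
          (1 / 2 : ℝ) * eucDiv (fun x => stretchMat b x (gradient φ x)) r) = 0 := by
  have hV : ContDiff ℝ 1 (gradient φ) := hφ.gradient (by norm_num)
  have hflux : ContDiff ℝ 1 fun y =>
      (1 + ‖y‖ ^ 2 / 2) ^ (-α) • (gradient φ y + (1 / 2 : ℝ) • stretchMat b y (gradient φ y)) :=
    (contDiff_one_add_norm_sq_div_two_rpow _).smul (hV.add ((hV.stretchMat b).const_smul _))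
  have hflux_supp : HasCompactSupport fun y =>
      (1 + ‖y‖ ^ 2 / 2) ^ (-α) • (gradient φ y + (1 / 2 : ℝ) • stretchMat b y (gradient φ y)) :=
    hsupp.gradient.mono fun y hy h0 => hy (by simp [h0, stretchMat_zero_right])
  simp_rw [← eucDiv_density_smul_add_half_stretchMat α b (hV.differentiable one_ne_zero _)]
  exact integral_eucDiv_eq_zero hflux hflux_supp

/-- the measure with density `(1+|r|²/2)^(−α)` is a distributional
solution of `div_r(α r μ + ∇_r μ + ½ A_b(r) ∇_r μ) = 0`: for every
`φ ∈ C_c²(ℝ^d)`,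
`∫ (1+|r|²/2)^(−α) [−α r·∇φ + Δφ + ½ div(A_b ∇φ)] dr = 0`. -/
theorem cauchy_measure_is_stationary
    (d : ℕ) (hd : d = 2 ∨ d = 3) (b : ℝ) (hb : b = 1 ∨ b = 2)
    (α : ℝ) (hα : 0 < α)
    (φ : EuclideanSpace ℝ (Fin d) → ℝ)
    (hφ : ContDiff ℝ 2 φ) (hsupp : HasCompactSupport φ) :
    ∫ r : EuclideanSpace ℝ (Fin d),
      (1 + ‖r‖ ^ 2 / 2) ^ (-α) *
        (-α * ⟪r, gradient φ r⟫ + eucDiv (fun x => gradient φ x) r +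
          (1 / 2 : ℝ) * eucDiv (fun x => stretchMat b x (gradient φ x)) r) = 0 :=
  cauchy_measure_is_stationary_general d b α φ hφ hsupp
end

section
/- (Stationary radial solution of the FENE operator) Let b, C_d > 0 and γ = b/(2 + C_d b). The radial function f(r) = ((b−|r|²)/b)^γ · ((2 + C_d|r|²)/2)^{−γ}, defined on {|r|² < b}, satisfies the first-order equation (b r/(b−|r|²)) f(r) + ∇_r f(r) + (C_d/2) A_b(r) ∇_r f(r) = 0 for |r|² < b, where in the radial reduction A_b(r)∇f = |r|²∇f for radial f (since ∇f is parallel to r and A_b(r)r = |r|²r). -/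
open scoped RealInnerProductSpace

/-!
Writing `f r = h (‖r‖²)`, the gradient is `2 h'(‖r‖²) r`, a multiple of `r`, on which `A_b(r)`
acts as multiplication by `‖r‖²`. The vector equation thus reduces to the scalar ODE
`b h(s) / (b - s) + (2 + C_d s) h'(s) = 0`, and the logarithmic derivative of the profile
`h(s) = ((b - s)/b)^γ ((2 + C_d s)/2)^(-γ)` is `-γ (2 + C_d b) / ((b - s)(2 + C_d s))`,
which equals `-b / ((b - s)(2 + C_d s))` exactly when `γ = b / (2 + C_d b)`.
-/

noncomputable def feneProfile (b Cd γ s : ℝ) : ℝ :=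
  ((b - s) / b) ^ γ * ((2 + Cd * s) / 2) ^ (-γ)

theorem hasDerivAt_feneProfile {b Cd γ s : ℝ} (hb : b ≠ 0) (hsb : b - s ≠ 0)
    (hs : 2 + Cd * s ≠ 0) :
    HasDerivAt (feneProfile b Cd γ)
      (-(γ * (2 + Cd * b)) / ((b - s) * (2 + Cd * s)) * feneProfile b Cd γ s) s := by
  have hu : HasDerivAt (fun s : ℝ => (b - s) / b) (-1 / b) s := by
    simpa [neg_div] using ((hasDerivAt_id s).const_sub b).div_const b
  have hv : HasDerivAt (fun s : ℝ => (2 + Cd * s) / 2) (Cd / 2) s := by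
    simpa using (((hasDerivAt_id s).const_mul Cd).const_add 2).div_const 2
  have hu0 : (b - s) / b ≠ 0 := div_ne_zero hsb hb
  have hv0 : (2 + Cd * s) / 2 ≠ 0 := div_ne_zero hs two_ne_zero
  refine ((hu.rpow_const (p := γ) (Or.inl hu0)).mul
    (hv.rpow_const (p := -γ) (Or.inl hv0))).congr_deriv ?_
  rw [Real.rpow_sub_one hu0, Real.rpow_sub_one hv0]
  have hs' : 2 + s * Cd ≠ 0 := by rwa [mul_comm]
  unfold feneProfile
  field_simp
  ring

theorem HasDerivAt.hasGradientAt_comp_norm_sq {E : Type*} [NormedAddCommGroup E]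
    [InnerProductSpace ℝ E] [CompleteSpace E] {h : ℝ → ℝ} {h' : ℝ} {x : E}
    (hh : HasDerivAt h h' (‖x‖ ^ 2)) :
    HasGradientAt (fun y => h (‖y‖ ^ 2)) ((2 * h') • x) x := by
  rw [hasGradientAt_iff_hasFDerivAt]
  refine (hh.comp_hasFDerivAt x (hasStrictFDerivAt_norm_sq x).hasFDerivAt).congr_fderiv ?_
  ext v
  simp
  ring

theorem stretchMat_smul_self {d : ℕ} (b c : ℝ) (r : EuclideanSpace ℝ (Fin d)) :
    stretchMat b r (c • r) = (‖r‖ ^ 2 * c) • r := by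
  rw [stretchMat, real_inner_smul_right, real_inner_self_eq_norm_sq, smul_smul, ← sub_smul]
  ring_nf

theorem fene_stationary_radial_solution_general
    (d : ℕ) (b Cd : ℝ) (hCd : 0 < Cd)
    (γ : ℝ) (hγ : γ = b / (2 + Cd * b))
    (f : EuclideanSpace ℝ (Fin d) → ℝ)
    (hf : ∀ r, f r = ((b - ‖r‖ ^ 2) / b) ^ γ * ((2 + Cd * ‖r‖ ^ 2) / 2) ^ (-γ))
    (r : EuclideanSpace ℝ (Fin d)) (hr : ‖r‖ ^ 2 < b) :
    (b / (b - ‖r‖ ^ 2) * f r) • r + gradient f r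
      + (Cd / 2) • stretchMat b r (gradient f r) = 0 := by
  set s := ‖r‖ ^ 2
  have hs : 0 ≤ s := by positivity
  have hb : 0 < b := hs.trans_lt hr
  have hsb : 0 < b - s := sub_pos.mpr hr
  have hCds : 0 < 2 + Cd * s := by positivity
  have hCdb : 0 < 2 + Cd * b := by positivity
  have hf_eq : f = fun y => feneProfile b Cd γ (‖y‖ ^ 2) := funext hf
  set h' := -(γ * (2 + Cd * b)) / ((b - s) * (2 + Cd * s)) * feneProfile b Cd γ s
  have hgrad : gradient f r = (2 * h') • r := by
    rw [hf_eq]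
    exact (hasDerivAt_feneProfile hb.ne' hsb.ne' hCds.ne').hasGradientAt_comp_norm_sq.gradient
  have hγ' : γ * (2 + Cd * b) = b := by rw [hγ]; field_simp
  rw [hgrad, stretchMat_smul_self, smul_smul, ← add_smul, ← add_smul, hf r]
  convert zero_smul ℝ r using 2
  simp only [h', hγ', feneProfile]
  field_simp
  ring

/-- stationary radial solution of the FENE operator: with
`γ = b/(2 + C_d b)`, the radial function
`f(r) = ((b−|r|²)/b)^γ ((2+C_d|r|²)/2)^(−γ)` satisfies
`(b r/(b−|r|²)) f + ∇f + (C_d/2) A_b(r) ∇f = 0` on `{|r|² < b}`. -/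
theorem fene_stationary_radial_solution
    (d : ℕ) (hd : d = 2 ∨ d = 3) (b Cd : ℝ) (hb : 0 < b) (hCd : 0 < Cd)
    (γ : ℝ) (hγ : γ = b / (2 + Cd * b))
    (f : EuclideanSpace ℝ (Fin d) → ℝ)
    (hf : ∀ r, f r = ((b - ‖r‖ ^ 2) / b) ^ γ * ((2 + Cd * ‖r‖ ^ 2) / 2) ^ (-γ))
    (r : EuclideanSpace ℝ (Fin d)) (hr : ‖r‖ ^ 2 < b) :
    (b / (b - ‖r‖ ^ 2) * f r) • r + gradient f r
      + (Cd / 2) • stretchMat b r (gradient f r) = 0 :=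
  fene_stationary_radial_solution_general d b Cd hCd γ hγ f hf r hr
end
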